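/- arXiv:2310.10242 — 2 statements merged into one kernel-verified Lean document; each statement's English description precedes it below -/
import Mathlib

section
/- Let d > 1 be real. If a,b ∈ A and i ≥ 1 are such that (E^i)_{a,b} > 0, then for all integers j ≥ 0 and k ≥ 1: F_{k+i}(e_b, (P*^{(0)},…,P*^{(k+i−1)}); 1/d, E) − Σ_{ℓ=0}^{k+i−1} ((d−1)/d^{ℓ+1})·γ ≥ F_k(e_a, (P*^{(j)},…,P*^{(j+k−1)}); 1/d, E) − Σ_{ℓ=0}^{k−1} ((d−1)/d^{ℓ+1})·γ. In particular, for every a ∈ A_∞ and every 0 ≤ i < L, the sequence n ↦ F_{Ln+i}(e_a, (P*^{(0)},…,P*^{(Ln+i−1)}); 1/d, E) − Σ_{ℓ=0}^{Ln+i−1} ((d−1)/d^{ℓ+1})·γ is nonnegative and non-decreasing in n. -/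
/-!
`λ^{(k)}` is the value function of the maximisation of `F_k`: column by column, Gibbs'
variational principle `Σ_a q_a log(w_a/q_a) ≤ log Σ_a w_a` gives `F_k(π,P) ≤ ⟨λ^{(k)},π⟩` for
every admissible `P`, with equality at `P*`, whose columns are the normalised weights `w`.
Along an edge `x → y` of `E`, keeping only the term `c = x` in the sum defining `λ^{(m+1)}_y`
gives `λ^{(m)}_x + ((d−1)/d^{m+1}) γ ≤ λ^{(m+1)}_y`; so `λ^{(m)} − (Σ_{ℓ<m} (d−1)/d^{ℓ+1}) γ`
increases along every path of `E`. The comparison is this along a path from `a` to `b` of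
length `i`; nonnegativity uses a path of length `Ln+i` ending at `a` (every column of `E` has a
positive entry), and monotonicity the cycle of length `L` through `a`.
-/

open Filter Topology

/-- Assumption (A): `E` has nonnegative entries with all column sums and row sums positive. -/
def AssumptionA {A : Type*} [Fintype A] (E : Matrix A A ℝ) : Prop :=
  (∀ a b, 0 ≤ E a b) ∧ (∀ b, 0 < ∑ a, E a b) ∧ (∀ a, 0 < ∑ b, E a b)

/-- A probability vector indexed by the alphabet `A`. -/
def IsProbVec {A : Type*} [Fintype A] (π : A → ℝ) : Prop :=
  (∀ a, 0 ≤ π a) ∧ ∑ a, π a = 1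

/-- A column-stochastic matrix: nonnegative entries, each column sums to `1`. -/
def IsColStochastic {A : Type*} [Fintype A] (P : Matrix A A ℝ) : Prop :=
  (∀ a b, 0 ≤ P a b) ∧ ∀ b, ∑ a, P a b = 1

/-- The Kullback–Leibler divergence vector `D_KL(Q‖M)_b = Σ_a Q_{a,b} log(Q_{a,b}/M_{a,b})`
(the convention `0 · log(0/0) = 0` is automatic). -/
noncomputable def DKL {A : Type*} [Fintype A] (Q M : Matrix A A ℝ) : A → ℝ :=
  fun b => ∑ a, Q a b * Real.log (Q a b / M a b)

/-- The vectors `λ^{(i)}`: `λ^{(0)} = 0` and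
`λ^{(i)}_a = ((d−1)/d^i) log Σ_b e^{(d^i/(d−1)) λ^{(i−1)}_b} E_{b,a}` (the summands with
`E_{b,a} = 0` vanish, so the sum may be taken over all of `A`). -/
noncomputable def lam {A : Type*} [Fintype A] (E : Matrix A A ℝ) (d : ℝ) : ℕ → A → ℝ
  | 0 => fun _ => 0
  | i + 1 => fun a =>
      ((d - 1) / d ^ (i + 1)) *
        Real.log (∑ b, Real.exp (d ^ (i + 1) / (d - 1) * lam E d i b) * E b a)

/-- The optimal transition matrices `P*^{(i)}`. -/
noncomputable def Pstar {A : Type*} [Fintype A] (E : Matrix A A ℝ) (d : ℝ) (i : ℕ) :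
    Matrix A A ℝ :=
  fun a b =>
    if 0 < E a b then
      Real.exp (d ^ (i + 1) / (d - 1) * lam E d i a) * E a b /
        ∑ c, Real.exp (d ^ (i + 1) / (d - 1) * lam E d i c) * E c b
    else 0

/-- The ordered product `P^{(j)} P^{(j+1)} ⋯ P^{(k−1)}`. -/
noncomputable def matListProd {A : Type*} [Fintype A] [DecidableEq A]
    (P : ℕ → Matrix A A ℝ) (j k : ℕ) : Matrix A A ℝ :=
  ((List.range' j (k - j)).map P).prod

/-- The objective function
`F_k(π,P;1/d,E) = −Σ_{j=0}^{k−1} ((d−1)/d^{j+1}) D_KL(P^{(j)}‖E)^T (P^{(j+1)}⋯P^{(k−1)}) π`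
(only `P 0, …, P (k−1)` are used). -/
noncomputable def Fk {A : Type*} [Fintype A] [DecidableEq A] (E : Matrix A A ℝ) (d : ℝ)
    (k : ℕ) (π : A → ℝ) (P : ℕ → Matrix A A ℝ) : ℝ :=
  -∑ j ∈ Finset.range k, ((d - 1) / d ^ (j + 1)) *
      ∑ b, DKL (P j) E b * (matListProd P (j + 1) k).mulVec π b

/-- `P^{(k)}(d,E)`: the maximum of `F_k` over the feasible domain. -/
noncomputable def Pk {A : Type*} [Fintype A] [DecidableEq A] (E : Matrix A A ℝ)
    (d : ℝ) (k : ℕ) : ℝ :=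
  sSup {x : ℝ | ∃ π P, IsProbVec π ∧ (∀ j < k, IsColStochastic (P j)) ∧
    (∀ j < k, ∀ a b, E a b = 0 → P j a b = 0) ∧ x = Fk E d k π P}

/-- `α = log min_b Σ_a E_{a,b}`. -/
noncomputable def alp {A : Type*} [Fintype A] (E : Matrix A A ℝ) : ℝ :=
  Real.log (sInf {x : ℝ | ∃ b, x = ∑ a, E a b})

/-- `β = log max_b Σ_a E_{a,b}`. -/
noncomputable def bet {A : Type*} [Fintype A] (E : Matrix A A ℝ) : ℝ :=
  Real.log (sSup {x : ℝ | ∃ b, x = ∑ a, E a b})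

/-- `γ = log min{E_{a,b} : E_{a,b} > 0}`. -/
noncomputable def gam {A : Type*} [Fintype A] (E : Matrix A A ℝ) : ℝ :=
  Real.log (sInf {x : ℝ | 0 < x ∧ ∃ a b, E a b = x})

/-- `A_∞`: the symbols lying on a cycle, i.e. `a` with `(E^n)_{a,a} > 0` for some `n ≥ 1`. -/
def AinfSet {A : Type*} [Fintype A] [DecidableEq A] (E : Matrix A A ℝ) : Set A :=
  {a | ∃ n : ℕ, 1 ≤ n ∧ 0 < (E ^ n) a a}

/-- `L`: the least `n ≥ 1` with `(E^n)_{a,a} > 0` for all `a ∈ A_∞`. -/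
noncomputable def Lconst {A : Type*} [Fintype A] [DecidableEq A] (E : Matrix A A ℝ) : ℕ :=
  sInf {n : ℕ | 1 ≤ n ∧ ∀ a ∈ AinfSet E, 0 < (E ^ n) a a}


open Finset Matrix

section NonnegMatrix

variable {n R : Type*} [Fintype n] [CommRing R] [LinearOrder R] [IsStrictOrderedRing R]
  {M N : Matrix n n R}

lemma Matrix.exists_pos_of_mul_apply_pos (hM : ∀ i j, 0 ≤ M i j) (hN : ∀ i j, 0 ≤ N i j)
    {i j : n} (h : 0 < (M * N) i j) : ∃ k, 0 < M i k ∧ 0 < N k j := by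
  obtain ⟨k, -, hk⟩ := (Finset.sum_pos_iff_of_nonneg fun k _ => mul_nonneg (hM i k) (hN k j)).1 h
  exact ⟨k, pos_of_mul_pos_left hk (hN k j), pos_of_mul_pos_right hk (hM i k)⟩

lemma Matrix.exists_pow_apply_pos [DecidableEq n] (hM : ∀ i j, 0 ≤ M i j)
    (hcol : ∀ j, 0 < ∑ i, M i j) (m : ℕ) (j : n) : ∃ i, 0 < (M ^ m) i j := by
  induction m generalizing j with
  | zero => exact ⟨j, by simp⟩
  | succ m ih =>
    obtain ⟨k, -, hkj⟩ := (Finset.sum_pos_iff_of_nonneg fun k _ => hM k j).1 (hcol j)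
    obtain ⟨i, hik⟩ := ih k
    refine ⟨i, ?_⟩
    rw [pow_succ, mul_apply]
    exact Finset.sum_pos' (fun l _ => mul_nonneg (pow_apply_nonneg hM m i l) (hM l j))
      ⟨k, Finset.mem_univ k, mul_pos hik hkj⟩

end NonnegMatrix

section Gibbs

open Real

variable {ι : Type*} [Fintype ι]

theorem Real.sum_mul_log_div_le_log_sum {q w : ι → ℝ} (hq : ∀ i, 0 ≤ q i) (hq1 : ∑ i, q i = 1)
    (hw : ∀ i, 0 ≤ w i) (hqw : ∀ i, w i = 0 → q i = 0) :
    ∑ i, q i * log (w i / q i) ≤ log (∑ i, w i) := by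
  set S := ∑ i, w i
  have hS : 0 < S := by
    obtain ⟨i, -, hi⟩ := exists_lt_of_sum_lt (s := univ) (f := 0) (g := q) (by simp [hq1])
    exact lt_of_lt_of_le ((hw i).lt_of_ne' fun h => hi.ne' (hqw i h))
      (single_le_sum (fun j _ => hw j) (mem_univ i))
  -- termwise `log x ≤ x - 1` at `x = w i / (q i * S)`
  have key : ∀ i, q i * log (w i / q i) - q i * log S ≤ w i / S - q i := by
    intro i
    rcases (hq i).eq_or_lt with h | h
    · simp [← h, div_nonneg (hw i) hS.le]
    · have hwi : 0 < w i := (hw i).lt_of_ne' fun h' => h.ne' (hqw i h')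
      have := mul_le_mul_of_nonneg_left
        (log_le_sub_one_of_pos (by positivity : 0 < w i / (q i * S))) h.le
      rw [div_mul_eq_div_div, log_div (by positivity) hS.ne'] at this
      calc q i * log (w i / q i) - q i * log S = q i * (log (w i / q i) - log S) := by ring
        _ ≤ q i * (w i / q i / S - 1) := this
        _ = w i / S - q i := by field_simp
  have := sum_le_sum fun i (_ : i ∈ univ) => key i
  rw [sum_sub_distrib, sum_sub_distrib, ← sum_mul, hq1, ← sum_div, div_self hS.ne'] at this
  linarith

theorem Real.sum_div_mul_log_div_div_eq_log_sum {w : ι → ℝ} (hW : ∑ i, w i ≠ 0) :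
    ∑ i, w i / (∑ j, w j) * log (w i / (w i / ∑ j, w j)) = log (∑ i, w i) := by
  have hterm : ∀ i, w i / (∑ j, w j) * log (w i / (w i / ∑ j, w j)) =
      w i / (∑ j, w j) * log (∑ j, w j) := by
    intro i
    rcases eq_or_ne (w i) 0 with h | h
    · simp [h]
    · rw [div_div_cancel₀ h]
  simp only [hterm, ← sum_mul, ← sum_div, div_self hW, one_mul]

end Gibbs

section ValueFunction

open Real

variable {A : Type*} [Fintype A] {E : Matrix A A ℝ} {d : ℝ}

lemma exp_gam_le {x y : A} (hxy : 0 < E x y) : exp (gam E) ≤ E x y := by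
  set S := {t : ℝ | 0 < t ∧ ∃ a b, E a b = t}
  have hfin : S.Finite := (Set.finite_range fun p : A × A => E p.1 p.2).subset
    (by rintro _ ⟨-, a, b, rfl⟩; exact ⟨(a, b), rfl⟩)
  have hmem : sInf S ∈ S := Set.Nonempty.csInf_mem ⟨E x y, hxy, x, y, rfl⟩ hfin
  rw [gam, exp_log hmem.1]
  exact csInf_le hfin.bddBelow ⟨hxy, x, y, rfl⟩

/-- The unnormalized column `b` of `P*^{(m)}`. -/
noncomputable def gibbsWeight (E : Matrix A A ℝ) (d : ℝ) (m : ℕ) (a b : A) : ℝ :=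
  exp (d ^ (m + 1) / (d - 1) * lam E d m a) * E a b

lemma lam_succ (m : ℕ) (b : A) :
    lam E d (m + 1) b = (d - 1) / d ^ (m + 1) * log (∑ a, gibbsWeight E d m a b) := rfl

lemma gibbsWeight_nonneg (hE : ∀ a b, 0 ≤ E a b) (m : ℕ) (a b : A) :
    0 ≤ gibbsWeight E d m a b :=
  mul_nonneg (exp_nonneg _) (hE a b)

lemma sum_gibbsWeight_pos (hE : ∀ a b, 0 ≤ E a b) (hcol : ∀ b, 0 < ∑ a, E a b) (m : ℕ)
    (b : A) : 0 < ∑ a, gibbsWeight E d m a b := by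
  obtain ⟨a, -, ha⟩ := (Finset.sum_pos_iff_of_nonneg fun a _ => hE a b).1 (hcol b)
  exact Finset.sum_pos' (fun a _ => gibbsWeight_nonneg hE m a b)
    ⟨a, mem_univ a, mul_pos (exp_pos _) ha⟩

lemma Pstar_eq_gibbsWeight_div (hE : ∀ a b, 0 ≤ E a b) (m : ℕ) (a b : A) :
    Pstar E d m a b = gibbsWeight E d m a b / ∑ c, gibbsWeight E d m c b := by
  unfold Pstar
  split_ifs with h
  · rfl
  · simp [gibbsWeight, le_antisymm (not_lt.mp h) (hE a b)]

lemma Pstar_eq_zero (m : ℕ) {a b : A} (h : E a b = 0) : Pstar E d m a b = 0 := by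
  simp [Pstar, h]

lemma isColStochastic_Pstar (hE : ∀ a b, 0 ≤ E a b) (hcol : ∀ b, 0 < ∑ a, E a b) (m : ℕ) :
    IsColStochastic (Pstar E d m) := by
  refine ⟨fun a b => ?_, fun b => ?_⟩
  · rw [Pstar_eq_gibbsWeight_div hE]
    exact div_nonneg (gibbsWeight_nonneg hE m a b) (sum_gibbsWeight_pos hE hcol m b).le
  · simp only [Pstar_eq_gibbsWeight_div hE, ← sum_div]
    exact div_self (sum_gibbsWeight_pos hE hcol m b).ne'

lemma vecMul_lam_sub_DKL (hE : ∀ a b, 0 ≤ E a b) (hd : 1 < d) {Q : Matrix A A ℝ}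
    (hQ : ∀ a b, 0 ≤ Q a b) (hQE : ∀ a b, E a b = 0 → Q a b = 0) (m : ℕ) (b : A) :
    (lam E d m ᵥ* Q) b - (d - 1) / d ^ (m + 1) * DKL Q E b =
      (d - 1) / d ^ (m + 1) * ∑ a, Q a b * log (gibbsWeight E d m a b / Q a b) := by
  have hd1 : 0 < d - 1 := by linarith
  have hterm : ∀ a, Q a b * log (gibbsWeight E d m a b / Q a b) =
      d ^ (m + 1) / (d - 1) * (lam E d m a * Q a b) - Q a b * log (Q a b / E a b) := by
    intro a
    rcases (hQ a b).eq_or_lt with h | h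
    · simp [← h]
    · have hEab : 0 < E a b := (hE a b).lt_of_ne' fun h' => h.ne' (hQE a b h')
      rw [gibbsWeight, log_div (by positivity) h.ne', log_div h.ne' hEab.ne',
        log_mul (exp_pos _).ne' hEab.ne', log_exp]
      ring
  simp only [hterm, sum_sub_distrib, ← mul_sum, vecMul, dotProduct, DKL]
  field_simp

lemma vecMul_lam_sub_DKL_le (hE : ∀ a b, 0 ≤ E a b) (hd : 1 < d) {Q : Matrix A A ℝ}
    (hQ : IsColStochastic Q) (hQE : ∀ a b, E a b = 0 → Q a b = 0) (m : ℕ) :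
    lam E d m ᵥ* Q - ((d - 1) / d ^ (m + 1)) • DKL Q E ≤ lam E d (m + 1) := by
  intro b
  have hc : 0 < (d - 1) / d ^ (m + 1) := div_pos (by linarith) (by positivity)
  rw [Pi.sub_apply, Pi.smul_apply, smul_eq_mul, vecMul_lam_sub_DKL hE hd hQ.1 hQE, lam_succ]
  exact mul_le_mul_of_nonneg_left (sum_mul_log_div_le_log_sum (fun a => hQ.1 a b) (hQ.2 b)
    (gibbsWeight_nonneg hE m · b) fun a ha => hQE a b (by simpa [gibbsWeight] using ha)) hc.le

lemma vecMul_lam_sub_DKL_Pstar (hE : ∀ a b, 0 ≤ E a b) (hcol : ∀ b, 0 < ∑ a, E a b)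
    (hd : 1 < d) (m : ℕ) :
    lam E d m ᵥ* Pstar E d m - ((d - 1) / d ^ (m + 1)) • DKL (Pstar E d m) E =
      lam E d (m + 1) := by
  funext b
  rw [Pi.sub_apply, Pi.smul_apply, smul_eq_mul,
    vecMul_lam_sub_DKL hE hd (isColStochastic_Pstar hE hcol m).1 (fun _ _ => Pstar_eq_zero m),
    lam_succ]
  simp only [Pstar_eq_gibbsWeight_div hE]
  rw [sum_div_mul_log_div_div_eq_log_sum (sum_gibbsWeight_pos hE hcol m b).ne']

end ValueFunction

section Objective

variable {A : Type*} [Fintype A] [DecidableEq A] {E : Matrix A A ℝ} {d : ℝ}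

lemma matListProd_self (P : ℕ → Matrix A A ℝ) (k : ℕ) : matListProd P k k = 1 := by
  simp [matListProd]

lemma matListProd_succ (P : ℕ → Matrix A A ℝ) {j k : ℕ} (h : j ≤ k) :
    matListProd P j (k + 1) = matListProd P j k * P k := by
  rw [matListProd, matListProd, show k + 1 - j = k - j + 1 by omega, List.range'_concat,
    List.map_append, List.prod_append]
  simp [Nat.add_sub_cancel' h]

lemma Fk_zero (π : A → ℝ) (P : ℕ → Matrix A A ℝ) : Fk E d 0 π P = 0 := by
  simp [Fk]

-- the last factor `P k` of every product is absorbed into the initial distribution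
lemma Fk_succ (k : ℕ) (π : A → ℝ) (P : ℕ → Matrix A A ℝ) :
    Fk E d (k + 1) π P =
      Fk E d k (P k *ᵥ π) P - (d - 1) / d ^ (k + 1) * (DKL (P k) E ⬝ᵥ π) := by
  have hprod : ∀ j ∈ range k, (matListProd P (j + 1) (k + 1)) *ᵥ π =
      matListProd P (j + 1) k *ᵥ (P k *ᵥ π) := fun j hj => by
    rw [matListProd_succ P (mem_range.1 hj), mulVec_mulVec]
  rw [Fk, Fk, sum_range_succ, sum_congr rfl fun j hj => by rw [hprod j hj],
    matListProd_self, one_mulVec, neg_add, dotProduct]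
  ring

lemma Fk_le_lam_dotProduct (hE : ∀ a b, 0 ≤ E a b) (hd : 1 < d) {P : ℕ → Matrix A A ℝ}
    (hP : ∀ j, IsColStochastic (P j)) (hPE : ∀ j a b, E a b = 0 → P j a b = 0) (k : ℕ)
    {π : A → ℝ} (hπ : 0 ≤ π) : Fk E d k π P ≤ lam E d k ⬝ᵥ π := by
  induction k generalizing π with
  | zero => simp [Fk_zero, lam]
  | succ k ih =>
    have hPπ : 0 ≤ P k *ᵥ π := fun a => dotProduct_nonneg_of_nonneg (fun b => (hP k).1 a b) hπ
    calc Fk E d (k + 1) π P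
        ≤ lam E d k ⬝ᵥ (P k *ᵥ π) - (d - 1) / d ^ (k + 1) * (DKL (P k) E ⬝ᵥ π) := by
          rw [Fk_succ]; linarith [ih hPπ]
      _ = (lam E d k ᵥ* P k - ((d - 1) / d ^ (k + 1)) • DKL (P k) E) ⬝ᵥ π := by
          rw [dotProduct_mulVec, sub_dotProduct, smul_dotProduct, smul_eq_mul]
      _ ≤ lam E d (k + 1) ⬝ᵥ π := dotProduct_le_dotProduct_of_nonneg_right
          (vecMul_lam_sub_DKL_le hE hd (hP k) (hPE k) k) hπ

lemma Fk_Pstar (hE : ∀ a b, 0 ≤ E a b) (hcol : ∀ b, 0 < ∑ a, E a b) (hd : 1 < d) (k : ℕ)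
    (π : A → ℝ) : Fk E d k π (Pstar E d) = lam E d k ⬝ᵥ π := by
  induction k generalizing π with
  | zero => simp [Fk_zero, lam]
  | succ k ih =>
    rw [Fk_succ, ih, dotProduct_mulVec, ← smul_eq_mul, ← smul_dotProduct, ← sub_dotProduct,
      vecMul_lam_sub_DKL_Pstar hE hcol hd]

end Objective

section Paths

open Real

variable {A : Type*} [Fintype A] {E : Matrix A A ℝ} {d : ℝ}

/-- `λ^{(m)}` minus the value `Σ_{ℓ<m} ((d−1)/d^{ℓ+1}) γ` it would have if every step of an
optimal path had the minimal weight `e^γ`. -/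
noncomputable def lamNormalized (E : Matrix A A ℝ) (d : ℝ) (m : ℕ) (x : A) : ℝ :=
  lam E d m x - (∑ ℓ ∈ range m, (d - 1) / d ^ (ℓ + 1)) * gam E

lemma lamNormalized_zero (x : A) : lamNormalized E d 0 x = 0 := by
  simp [lamNormalized, lam]

lemma lamNormalized_le_succ (hE : ∀ a b, 0 ≤ E a b) (hd : 1 < d) {x y : A} (hxy : 0 < E x y)
    (m : ℕ) : lamNormalized E d m x ≤ lamNormalized E d (m + 1) y := by
  have hd1 : 0 < d - 1 := by linarith
  set t := d ^ (m + 1) / (d - 1) with ht_def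
  have hweight : exp (t * lam E d m x + gam E) ≤ ∑ c, gibbsWeight E d m c y := by
    rw [exp_add]
    exact (mul_le_mul_of_nonneg_left (exp_gam_le hxy) (exp_nonneg _)).trans
      (single_le_sum (fun c _ => gibbsWeight_nonneg hE m c y) (mem_univ x))
  have hlog := log_le_log (exp_pos _) hweight
  rw [log_exp] at hlog
  have hstep : lam E d m x + (d - 1) / d ^ (m + 1) * gam E ≤ lam E d (m + 1) y := by
    rw [lam_succ]
    calc lam E d m x + (d - 1) / d ^ (m + 1) * gam E
        = t⁻¹ * (t * lam E d m x + gam E) := by rw [ht_def]; field_simp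
      _ ≤ t⁻¹ * log (∑ c, gibbsWeight E d m c y) := by gcongr
      _ = (d - 1) / d ^ (m + 1) * log (∑ c, gibbsWeight E d m c y) := by
        rw [inv_div]
  simp only [lamNormalized, sum_range_succ]
  linarith

lemma lamNormalized_le_add_of_pow_apply_pos [DecidableEq A] (hE : ∀ a b, 0 ≤ E a b)
    (hd : 1 < d) (m : ℕ) {i : ℕ} {x y : A} (hxy : 0 < (E ^ i) x y) :
    lamNormalized E d m x ≤ lamNormalized E d (m + i) y := by
  induction i generalizing y with
  | zero =>
    obtain rfl : x = y := by by_contra h; simp [one_apply_ne h] at hxy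
    rfl
  | succ i ih =>
    rw [pow_succ] at hxy
    obtain ⟨z, hxz, hzy⟩ := exists_pos_of_mul_apply_pos (pow_apply_nonneg hE i) hE hxy
    exact (ih hxz).trans (lamNormalized_le_succ hE hd hzy (m + i))

-- if no `n ≥ 1` qualifies, `Lconst E = sInf ∅ = 0` and `E ^ 0 = 1`
lemma pow_Lconst_apply_self_pos [DecidableEq A] {a : A} (ha : a ∈ AinfSet E) :
    0 < (E ^ Lconst E) a a := by
  rcases Set.eq_empty_or_nonempty {n : ℕ | 1 ≤ n ∧ ∀ a ∈ AinfSet E, 0 < (E ^ n) a a} with h | h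
  · simp [Lconst, h]
  · exact (Nat.sInf_mem h).2 a ha

end Paths

theorem stmt15_general {A : Type*} [Fintype A] [DecidableEq A] (E : Matrix A A ℝ)
    (hE : AssumptionA E) (d : ℝ) (hd : 1 < d) :
    (∀ a b : A, ∀ i : ℕ, 1 ≤ i → 0 < (E ^ i) a b → ∀ j k : ℕ, 1 ≤ k →
      Fk E d k (Pi.single a 1) (fun ℓ => Pstar E d (j + ℓ)) -
          (∑ ℓ ∈ Finset.range k, (d - 1) / d ^ (ℓ + 1)) * gam E ≤
        Fk E d (k + i) (Pi.single b 1) (fun ℓ => Pstar E d ℓ) -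
          (∑ ℓ ∈ Finset.range (k + i), (d - 1) / d ^ (ℓ + 1)) * gam E) ∧
    ∀ a ∈ AinfSet E, ∀ i : ℕ, i < Lconst E →
      (∀ n : ℕ,
        0 ≤ Fk E d (Lconst E * n + i) (Pi.single a 1) (fun ℓ => Pstar E d ℓ) -
            (∑ ℓ ∈ Finset.range (Lconst E * n + i), (d - 1) / d ^ (ℓ + 1)) * gam E) ∧
      Monotone (fun n : ℕ =>
        Fk E d (Lconst E * n + i) (Pi.single a 1) (fun ℓ => Pstar E d ℓ) -
          (∑ ℓ ∈ Finset.range (Lconst E * n + i), (d - 1) / d ^ (ℓ + 1)) * gam E) := by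
  obtain ⟨hE0, hcol, -⟩ := hE
  have hFk : ∀ k c, Fk E d k (Pi.single c 1) (fun ℓ => Pstar E d ℓ) -
      (∑ ℓ ∈ Finset.range k, (d - 1) / d ^ (ℓ + 1)) * gam E = lamNormalized E d k c :=
    fun k c => by rw [Fk_Pstar hE0 hcol hd, dotProduct_single_one]; rfl
  have hpath : ∀ {i x y} (m : ℕ), 0 < (E ^ i) x y →
      lamNormalized E d m x ≤ lamNormalized E d (m + i) y :=
    fun m => lamNormalized_le_add_of_pow_apply_pos hE0 hd m
  refine ⟨fun a b i _ hab j k _ => ?_, fun a ha i _ => ?_⟩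
  · have hshift := Fk_le_lam_dotProduct hE0 hd (P := fun ℓ => Pstar E d (j + ℓ))
      (fun ℓ => isColStochastic_Pstar hE0 hcol (j + ℓ)) (fun ℓ _ _ => Pstar_eq_zero (j + ℓ)) k
      (Pi.single_nonneg.2 zero_le_one : 0 ≤ Pi.single a (1 : ℝ))
    rw [dotProduct_single_one] at hshift
    calc _ ≤ lamNormalized E d k a := sub_le_sub_right hshift _
      _ ≤ lamNormalized E d (k + i) b := hpath k hab
      _ = _ := (hFk _ _).symm
  simp only [hFk]
  refine ⟨fun n => ?_, monotone_nat_of_le_succ fun n => ?_⟩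
  · obtain ⟨x, hx⟩ := exists_pow_apply_pos hE0 hcol (Lconst E * n + i) a
    simpa [lamNormalized_zero] using hpath 0 hx
  · have := hpath (Lconst E * n + i) (pow_Lconst_apply_self_pos ha)
    rwa [show Lconst E * n + i + Lconst E = Lconst E * (n + 1) + i by ring] at this

/-- comparison of the shifted truncated objectives along admissible paths,
and the resulting nonnegativity and monotonicity along arithmetic progressions `Ln+i`. -/
theorem stmt15 {A : Type*} [Fintype A] [DecidableEq A] [Nonempty A] (E : Matrix A A ℝ)
    (hE : AssumptionA E) (d : ℝ) (hd : 1 < d) :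
    (∀ a b : A, ∀ i : ℕ, 1 ≤ i → 0 < (E ^ i) a b → ∀ j k : ℕ, 1 ≤ k →
      Fk E d k (Pi.single a 1) (fun ℓ => Pstar E d (j + ℓ)) -
          (∑ ℓ ∈ Finset.range k, (d - 1) / d ^ (ℓ + 1)) * gam E ≤
        Fk E d (k + i) (Pi.single b 1) (fun ℓ => Pstar E d ℓ) -
          (∑ ℓ ∈ Finset.range (k + i), (d - 1) / d ^ (ℓ + 1)) * gam E) ∧
    ∀ a ∈ AinfSet E, ∀ i : ℕ, i < Lconst E →
      (∀ n : ℕ,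
        0 ≤ Fk E d (Lconst E * n + i) (Pi.single a 1) (fun ℓ => Pstar E d ℓ) -
            (∑ ℓ ∈ Finset.range (Lconst E * n + i), (d - 1) / d ^ (ℓ + 1)) * gam E) ∧
      Monotone (fun n : ℕ =>
        Fk E d (Lconst E * n + i) (Pi.single a 1) (fun ℓ => Pstar E d ℓ) -
          (∑ ℓ ∈ Finset.range (Lconst E * n + i), (d - 1) / d ^ (ℓ + 1)) * gam E) :=
  stmt15_general E hE d hd
end

section
/- For every a ∈ A and every integer k ≥ |A|, there exists b ∈ A_∞ such that (E^k)_{a,b} > 0. -/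
section Aux

variable {A : Type*} [Fintype A] [DecidableEq A] (E : Matrix A A ℝ)

lemma pow_nonneg_entry (h : ∀ a b, 0 ≤ E a b) (n : ℕ) (a b : A) :
    0 ≤ (E ^ n) a b := by
  induction n generalizing a b with
  | zero =>
    simp only [pow_zero, Matrix.one_apply]
    split <;> norm_num
  | succ n ih =>
    rw [pow_succ, Matrix.mul_apply]
    exact Finset.sum_nonneg fun c _ => mul_nonneg (ih a c) (h c b)

lemma pow_pos_trans (h : ∀ a b, 0 ≤ E a b) {m n : ℕ} {a c b : A}
    (h1 : 0 < (E ^ m) a c) (h2 : 0 < (E ^ n) c b) :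
    0 < (E ^ (m + n)) a b := by
  rw [pow_add, Matrix.mul_apply]
  refine Finset.sum_pos' (fun x _ => mul_nonneg (pow_nonneg_entry E h m a x)
    (pow_nonneg_entry E h n x b)) ⟨c, Finset.mem_univ c, mul_pos h1 h2⟩

lemma exists_step (hE : AssumptionA E) (a : A) : ∃ b, 0 < E a b := by
  by_contra hcon
  push_neg at hcon
  have : (∑ b, E a b) ≤ 0 := Finset.sum_nonpos fun b _ => hcon b
  exact absurd (hE.2.2 a) (not_lt.mpr this)

lemma step_Ainf (hE : AssumptionA E) {a : A} (ha : a ∈ AinfSet E) :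
    ∃ b ∈ AinfSet E, 0 < E a b := by
  obtain ⟨n, hn1, hn⟩ := ha
  obtain ⟨m, rfl⟩ := Nat.exists_eq_add_of_le hn1
  rw [add_comm, pow_succ'] at hn
  rw [Matrix.mul_apply] at hn
  have := Finset.exists_lt_of_sum_lt (f := fun _ => (0 : ℝ)) (by simpa using hn)
  obtain ⟨b, -, hb⟩ := this
  have hEab : 0 < E a b := by
    by_contra h
    push_neg at h
    have : E a b = 0 := le_antisymm h (hE.1 a b)
    rw [this, zero_mul] at hb
    exact lt_irrefl _ hb
  have hmb : 0 < (E ^ m) b a := by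
    by_contra h
    push_neg at h
    have : (E ^ m) b a = 0 := le_antisymm h (pow_nonneg_entry E hE.1 m b a)
    rw [this, mul_zero] at hb
    exact lt_irrefl _ hb
  refine ⟨b, ⟨m + 1, Nat.le_add_left 1 m, ?_⟩, hEab⟩
  have := pow_pos_trans E hE.1 hmb (by rwa [pow_one])
  simpa using this

lemma extend_Ainf (hE : AssumptionA E) {a : A} (ha : a ∈ AinfSet E) (m : ℕ) :
    ∃ b ∈ AinfSet E, 0 < (E ^ m) a b := by
  induction m with
  | zero => exact ⟨a, ha, by simp [Matrix.one_apply]⟩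
  | succ m ih =>
    obtain ⟨c, hc, hac⟩ := ih
    obtain ⟨b, hb, hcb⟩ := step_Ainf E hE hc
    exact ⟨b, hb, pow_pos_trans E hE.1 hac (by rwa [pow_one])⟩

end Aux

/-- for every `a ∈ A` and every `k ≥ |A|` there is `b ∈ A_∞` with
`(E^k)_{a,b} > 0`. -/
theorem stmt17 {A : Type*} [Fintype A] [DecidableEq A] (E : Matrix A A ℝ)
    (hE : AssumptionA E) (a : A) (k : ℕ) (hk : Fintype.card A ≤ k) :
    ∃ b ∈ AinfSet E, 0 < (E ^ k) a b := by
  -- build an infinite path starting at `a`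
  have step : ∀ x : A, ∃ y, 0 < E x y := exists_step E hE
  let f : ℕ → A := fun n => Nat.rec a (fun _ x => Classical.choose (step x)) n
  have hf : ∀ n, 0 < E (f n) (f (n + 1)) := fun n => Classical.choose_spec (step (f n))
  have hpath : ∀ m n : ℕ, 0 < (E ^ n) (f m) (f (m + n)) := by
    intro m n
    induction n with
    | zero => simp [Matrix.one_apply]
    | succ n ih =>
      have := pow_pos_trans E hE.1 ih (show 0 < (E ^ 1) (f (m + n)) (f (m + n + 1)) by
        rw [pow_one]; exact hf (m + n))
      simpa [add_assoc] using this
  -- pigeonhole: a repeated vertex among `f 0, ..., f (card A)`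
  have hcard : Fintype.card A < Fintype.card (Fin (Fintype.card A + 1)) := by simp
  obtain ⟨i, j, hij, heq⟩ := Fintype.exists_ne_map_eq_of_card_lt
    (fun x : Fin (Fintype.card A + 1) => f x.val) hcard
  -- wlog i < j
  rcases lt_or_gt_of_ne (fun h => hij (Fin.ext h)) with hlt | hlt
  case _ =>
    have hi : (i : ℕ) ≤ Fintype.card A := Nat.lt_succ_iff.mp i.isLt
    have hcyc : 0 < (E ^ ((j : ℕ) - i)) (f i) (f i) := by
      have := hpath i ((j : ℕ) - i)
      rwa [Nat.add_sub_cancel' (le_of_lt hlt), ← heq] at this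
    have hmem : f i ∈ AinfSet E := ⟨(j : ℕ) - i, Nat.le_sub_of_add_le (by omega), hcyc⟩
    obtain ⟨b, hb, hbpos⟩ := extend_Ainf E hE hmem (k - i)
    refine ⟨b, hb, ?_⟩
    have := pow_pos_trans E hE.1 (by simpa using hpath 0 i) hbpos
    rwa [Nat.add_sub_cancel' (le_trans hi hk)] at this
  case _ =>
    have hj : (j : ℕ) ≤ Fintype.card A := Nat.lt_succ_iff.mp j.isLt
    have hcyc : 0 < (E ^ ((i : ℕ) - j)) (f j) (f j) := by
      have := hpath j ((i : ℕ) - j)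
      rwa [Nat.add_sub_cancel' (le_of_lt hlt), heq] at this
    have hmem : f j ∈ AinfSet E := ⟨(i : ℕ) - j, Nat.le_sub_of_add_le (by omega), hcyc⟩
    obtain ⟨b, hb, hbpos⟩ := extend_Ainf E hE hmem (k - j)
    refine ⟨b, hb, ?_⟩
    have := pow_pos_trans E hE.1 (by simpa using hpath 0 j) hbpos
    rwa [Nat.add_sub_cancel' (le_trans hj hk)] at this
end
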